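/- arXiv:2305.05141 — 2 statements merged into one kernel-verified Lean document; each statement's English description precedes it below -/
import Mathlib

section
/- Let p, k, s be integers with 1 ≤ s ≤ k ≤ p, let A be a subset of {1,…,p} with |A| = s, and let q : {1,…,p} → ℝ satisfy 0 ≤ q_j ≤ 1 for all j, ∑_{j=1}^p q_j = k, and q_j ≥ q_{j'} for every j ∈ A and every j' ∉ A. Then for every j ∈ A, q_j ≥ (k − s + 1)/(p − s + 1) ≥ 1/p. -/
open Finset

/-- The combinatorial weight bound (display (16)) used in the proofs of
Theorems 1 and 2: if `q : {1,…,p} → [0,1]` sums to `k`, and the weights on the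
active set `A` (of cardinality `s`, with `1 ≤ s ≤ k ≤ p`) dominate those
outside of `A`, then every active weight is at least
`(k − s + 1)/(p − s + 1) ≥ 1/p`. -/
theorem stmt3 (p k s : ℕ) (hs : 1 ≤ s) (hsk : s ≤ k) (hkp : k ≤ p)
    (A : Finset (Fin p)) (hA : A.card = s)
    (q : Fin p → ℝ)
    (hq0 : ∀ j, 0 ≤ q j) (hq1 : ∀ j, q j ≤ 1)
    (hsum : ∑ j, q j = k)
    (hdom : ∀ j ∈ A, ∀ j' ∉ A, q j' ≤ q j) :
    ∀ j ∈ A,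
      ((k : ℝ) - s + 1) / ((p : ℝ) - s + 1) ≤ q j ∧
        1 / (p : ℝ) ≤ ((k : ℝ) - s + 1) / ((p : ℝ) - s + 1) := by
  have hsp : s ≤ p := hsk.trans hkp
  have hp1 : (1:ℝ) ≤ p := by exact_mod_cast hs.trans hsp
  have hden : (0:ℝ) < (p : ℝ) - s + 1 := by
    have : (s:ℝ) ≤ p := by exact_mod_cast hsp
    linarith
  intro j hj
  constructor
  · -- main bound
    rw [div_le_iff₀ hden]
    -- split the sum
    have hsplit : ∑ i, q i = ∑ i ∈ A, q i + ∑ i ∈ Aᶜ, q i := by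
      rw [Finset.sum_add_sum_compl]
    have h1 : ∑ i ∈ A, q i ≤ q j + ((s:ℝ) - 1) := by
      rw [← Finset.add_sum_erase _ _ hj]
      have : ∑ i ∈ A.erase j, q i ≤ ∑ i ∈ A.erase j, (1:ℝ) :=
        Finset.sum_le_sum fun i _ => hq1 i
      rw [Finset.sum_const, nsmul_eq_mul, mul_one, Finset.card_erase_of_mem hj, hA] at this
      have hcast : ((s - 1 : ℕ) : ℝ) = (s:ℝ) - 1 := by
        have := hs; push_cast [Nat.cast_sub hs]; ring
      rw [hcast] at this
      linarith
    have h2 : ∑ i ∈ Aᶜ, q i ≤ ((p:ℝ) - s) * q j := by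
      have : ∑ i ∈ Aᶜ, q i ≤ ∑ i ∈ Aᶜ, q j :=
        Finset.sum_le_sum fun i hi => hdom j hj i (Finset.mem_compl.mp hi)
      rw [Finset.sum_const, nsmul_eq_mul, Finset.card_compl, Fintype.card_fin, hA] at this
      have hcast : ((p - s : ℕ) : ℝ) = (p:ℝ) - s := by push_cast [Nat.cast_sub hsp]; ring
      rw [hcast] at this
      linarith
    have : (k:ℝ) ≤ q j + ((s:ℝ) - 1) + ((p:ℝ) - s) * q j := by
      rw [← hsum, hsplit]; linarith
    nlinarith
  · rw [div_le_div_iff₀ (by linarith) hden]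
    have hks : (s:ℝ) ≤ k := by exact_mod_cast hsk
    have hs1 : (1:ℝ) ≤ s := by exact_mod_cast hs
    nlinarith [mul_nonneg (sub_nonneg.mpr hks) (le_trans zero_le_one hp1)]
end

section
/- Let u, v ∈ ℝ^p be unit vectors and let λ ∈ ℝ with 0 ≤ λ < 1. Then Tr[(I_p − λ·v·vᵀ)⁻¹·(I_p − λ·u·uᵀ)] − p = (λ²/(1−λ))·(1 − (uᵀv)²), and this quantity is at most (2λ²/(1−λ))·‖u − v‖₂². -/
/-!
Since `v vᵀ` is idempotent for a unit vector `v`, the inverse of `I - λ v vᵀ` is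
`I + (λ / (1 - λ)) v vᵀ`, and expanding the product and taking traces gives the identity.
For the bound, write `s = uᵀv`: then `‖u - v‖² = 2 - 2s ≥ 0`, so
`1 - s² = (1 - s)(1 + s) ≤ 2 (1 - s) = ‖u - v‖²`.
-/

open Matrix

lemma vecMulVec_self_mul_self {n R : Type*} [Fintype n] [CommSemiring R] {v : n → R}
    (hv : v ⬝ᵥ v = 1) : vecMulVec v v * vecMulVec v v = vecMulVec v v := by
  rw [vecMulVec_mul_vecMulVec, hv, one_smul]

section
variable {n K : Type*} [Fintype n] [DecidableEq n] [Field K]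

lemma inv_one_sub_smul_vecMulVec_self {v : n → K} (hv : v ⬝ᵥ v = 1) {lam : K} (hlam : lam ≠ 1) :
    (1 - lam • vecMulVec v v)⁻¹ = 1 + (lam / (1 - lam)) • vecMulVec v v := by
  apply inv_eq_right_inv
  have hcoef : lam / (1 - lam) - lam - lam * (lam / (1 - lam)) = 0 := by
    field_simp
    ring
  calc (1 - lam • vecMulVec v v) * (1 + (lam / (1 - lam)) • vecMulVec v v)
      = 1 + (lam / (1 - lam) - lam - lam * (lam / (1 - lam))) • vecMulVec v v := by
        simp only [Matrix.sub_mul, Matrix.mul_add, Matrix.one_mul, Matrix.mul_one,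
          Matrix.smul_mul, Matrix.mul_smul, vecMulVec_self_mul_self hv]
        module
    _ = 1 := by rw [hcoef, zero_smul, add_zero]

lemma trace_inv_one_sub_smul_vecMulVec_mul_sub_card {u v : n → K}
    (hu : u ⬝ᵥ u = 1) (hv : v ⬝ᵥ v = 1) {lam : K} (hlam : lam ≠ 1) :
    trace ((1 - lam • vecMulVec v v)⁻¹ * (1 - lam • vecMulVec u u)) - Fintype.card n
      = lam ^ 2 / (1 - lam) * (1 - (u ⬝ᵥ v) ^ 2) := by
  rw [inv_one_sub_smul_vecMulVec_self hv hlam]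
  simp only [Matrix.add_mul, Matrix.one_mul, Matrix.mul_sub, Matrix.mul_one,
    Matrix.smul_mul, Matrix.mul_smul, vecMulVec_mul_vecMulVec, trace_sub, trace_add,
    trace_smul, trace_one, trace_vecMulVec, dotProduct_smul, smul_eq_mul, hu, hv,
    dotProduct_comm v u]
  field_simp
  ring

end

lemma sum_sub_sq_eq_two_sub_two_mul_dotProduct {n R : Type*} [Fintype n] [CommRing R]
    {u v : n → R} (hu : u ⬝ᵥ u = 1) (hv : v ⬝ᵥ v = 1) :
    ∑ i, (u i - v i) ^ 2 = 2 - 2 * (u ⬝ᵥ v) := by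
  calc ∑ i, (u i - v i) ^ 2 = (u - v) ⬝ᵥ (u - v) := by simp only [dotProduct, Pi.sub_apply, sq]
    _ = 2 - 2 * (u ⬝ᵥ v) := by
      rw [sub_dotProduct, dotProduct_sub, dotProduct_sub, hu, hv, dotProduct_comm v u]
      ring

lemma one_sub_dotProduct_sq_le_sum_sub_sq {n R : Type*} [Fintype n] [CommRing R] [LinearOrder R]
    [IsStrictOrderedRing R] {u v : n → R} (hu : u ⬝ᵥ u = 1) (hv : v ⬝ᵥ v = 1) :
    1 - (u ⬝ᵥ v) ^ 2 ≤ ∑ i, (u i - v i) ^ 2 := by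
  have hsum := sum_sub_sq_eq_two_sub_two_mul_dotProduct hu hv
  have hnonneg : 0 ≤ ∑ i, (u i - v i) ^ 2 := Finset.sum_nonneg fun i _ => sq_nonneg _
  nlinarith

theorem stmt5_general (p : ℕ) (u v : Fin p → ℝ)
    (hu : ∑ i, u i ^ 2 = 1) (hv : ∑ i, v i ^ 2 = 1)
    (lam : ℝ) (hlam1 : lam < 1) :
    Matrix.trace ((1 - lam • vecMulVec v v)⁻¹ * (1 - lam • vecMulVec u u)) - p
        = lam ^ 2 / (1 - lam) * (1 - (u ⬝ᵥ v) ^ 2) ∧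
      lam ^ 2 / (1 - lam) * (1 - (u ⬝ᵥ v) ^ 2)
        ≤ 2 * lam ^ 2 / (1 - lam) * ∑ i, (u i - v i) ^ 2 := by
  have hu' : u ⬝ᵥ u = 1 := by simpa [dotProduct, sq] using hu
  have hv' : v ⬝ᵥ v = 1 := by simpa [dotProduct, sq] using hv
  have hcoef : 0 ≤ lam ^ 2 / (1 - lam) := div_nonneg (sq_nonneg lam) (by linarith)
  have hsum : 0 ≤ ∑ i, (u i - v i) ^ 2 := Finset.sum_nonneg fun i _ => sq_nonneg _
  refine ⟨by simpa using trace_inv_one_sub_smul_vecMulVec_mul_sub_card hu' hv' hlam1.ne, ?_⟩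
  calc lam ^ 2 / (1 - lam) * (1 - (u ⬝ᵥ v) ^ 2)
      ≤ lam ^ 2 / (1 - lam) * ∑ i, (u i - v i) ^ 2 :=
        mul_le_mul_of_nonneg_left (one_sub_dotProduct_sq_le_sum_sub_sq hu' hv') hcoef
    _ ≤ 2 * lam ^ 2 / (1 - lam) * ∑ i, (u i - v i) ^ 2 := by
        rw [mul_div_assoc]
        exact mul_le_mul_of_nonneg_right (by linarith) hsum

/-- The trace-term bound `T₁` in the KL-divergence computation of the proof of
Theorem 3: for unit vectors `u, v ∈ ℝ^p` and `0 ≤ λ < 1`,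
`Tr[(I − λ v vᵀ)⁻¹ (I − λ u uᵀ)] − p = (λ²/(1−λ))(1 − (uᵀv)²)`
and this is at most `(2λ²/(1−λ)) ‖u − v‖₂²`. -/
theorem stmt5 (p : ℕ) (u v : Fin p → ℝ)
    (hu : ∑ i, u i ^ 2 = 1) (hv : ∑ i, v i ^ 2 = 1)
    (lam : ℝ) (hlam0 : 0 ≤ lam) (hlam1 : lam < 1) :
    Matrix.trace ((1 - lam • vecMulVec v v)⁻¹ * (1 - lam • vecMulVec u u)) - p
        = lam ^ 2 / (1 - lam) * (1 - (u ⬝ᵥ v) ^ 2) ∧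
      lam ^ 2 / (1 - lam) * (1 - (u ⬝ᵥ v) ^ 2)
        ≤ 2 * lam ^ 2 / (1 - lam) * ∑ i, (u i - v i) ^ 2 :=
  stmt5_general p u v hu hv lam hlam1
end
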